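/- Let λ > 0, β ∈ ℝ^p, θ ∈ ℝ^n. Assume Ω(β) and Ω*(X^⊤θ) are finite and that the supremum defining f*(−λθ) is attained at some z₀ ∈ ℝ^n. Define Ω̃(β, θ) = Ω(β) + Ω*(X^⊤θ) − ⟨X^⊤θ, β⟩ (which is nonnegative). If f is U-convex for a function U : ℝ^n → [0, ∞) with U(0) = 0, then λΩ̃(β, θ) + U(Xβ − z₀) ≤ Gap_λ(β, θ); if f is V-smooth for a function V : ℝ^n → [0, ∞) with V(0) = 0, then Gap_λ(β, θ) ≤ λΩ̃(β, θ) + V(Xβ − z₀). -/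

import Mathlib

/-!
Fenchel–Young for `Ω` gives `Ω̃(β, θ) ≥ 0`. Since `z₀` maximizes `z ↦ ⟪-λθ, z⟫ - f z`, the
first-order condition gives `∇f(z₀) = -λθ`, and with it `Gap_λ(β, θ) - λ Ω̃(β, θ)` is exactly the
Bregman divergence `f(Xβ) - f(z₀) - ⟪∇f(z₀), Xβ - z₀⟫`, which `U`-convexity bounds from below and
`V`-smoothness from above.
-/

open scoped RealInnerProductSpace

noncomputable section

abbrev Vec (d : ℕ) := EuclideanSpace ℝ (Fin d)

/-- Matrix–vector product, landing in Euclidean space. -/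
def mv {a b : ℕ} (M : Matrix (Fin a) (Fin b) ℝ) (v : Vec b) : Vec a := WithLp.toLp 2 (M.mulVec v)

/-- Fenchel conjugate of a real-valued function, with values in `EReal`. -/
noncomputable def rconj {d : ℕ} (f : Vec d → ℝ) (u : Vec d) : EReal :=
  ⨆ x, ((⟪u, x⟫ - f x : ℝ) : EReal)

/-- Fenchel conjugate of an `EReal`-valued function. -/
noncomputable def econj {d : ℕ} (g : Vec d → EReal) (u : Vec d) : EReal :=
  ⨆ x, (((⟪u, x⟫ : ℝ) : EReal) - g x)

lemma inner_mv_transpose {n p : ℕ} (X : Matrix (Fin n) (Fin p) ℝ) (θ : Vec n) (β : Vec p) :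
    ⟪mv X.transpose θ, β⟫ = ⟪θ, mv X β⟫ := by
  simp only [mv, PiLp.inner_apply, RCLike.inner_apply, starRingEnd_apply, star_trivial,
    Matrix.mulVec, dotProduct, Matrix.transpose_apply, Finset.sum_mul, Finset.mul_sum]
  rw [Finset.sum_comm]
  congr 1; ext i; congr 1; ext j; ring

lemma inner_le_add_of_econj_eq {d : ℕ} {g : Vec d → EReal} {u x : Vec d} {a b : ℝ}
    (hx : g x = a) (hu : econj g u = b) : ⟪u, x⟫ ≤ a + b := by
  have h : ((⟪u, x⟫ : ℝ) : EReal) - g x ≤ econj g u :=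
    le_iSup (fun y => ((⟪u, y⟫ : ℝ) : EReal) - g y) x
  rw [hx, hu, ← EReal.coe_sub, EReal.coe_le_coe_iff] at h
  linarith

lemma inner_sub_le_of_rconj_eq {d : ℕ} {f : Vec d → ℝ} {u z₀ : Vec d}
    (hz₀ : rconj f u = ((⟪u, z₀⟫ - f z₀ : ℝ) : EReal)) (z : Vec d) :
    ⟪u, z⟫ - f z ≤ ⟪u, z₀⟫ - f z₀ := by
  have h : ((⟪u, z⟫ - f z : ℝ) : EReal) ≤ rconj f u :=
    le_iSup (fun y => ((⟪u, y⟫ - f y : ℝ) : EReal)) z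
  rwa [hz₀, EReal.coe_le_coe_iff] at h

open InnerProductSpace in
lemma HasGradientAt.eq_of_forall_inner_sub_le {F : Type*} [NormedAddCommGroup F]
    [InnerProductSpace ℝ F] [CompleteSpace F] {f : F → ℝ} {g u z₀ : F}
    (hf : HasGradientAt f g z₀) (hmax : ∀ z, ⟪u, z⟫ - f z ≤ ⟪u, z₀⟫ - f z₀) : g = u := by
  have hD : HasFDerivAt (fun z => ⟪u, z⟫ - f z) (toDual ℝ F u - toDual ℝ F g) z₀ :=
    (toDual ℝ F u).hasFDerivAt.sub hf.hasFDerivAt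
  have hloc : IsLocalMax (fun z => ⟪u, z⟫ - f z) z₀ := Filter.Eventually.of_forall hmax
  exact ((toDual ℝ F).injective (sub_eq_zero.mp (hloc.hasFDerivAt_eq_zero hD))).symm

lemma gradient_eq_of_rconj_eq {d : ℕ} {f : Vec d → ℝ} {g u z₀ : Vec d}
    (hf : HasGradientAt f g z₀) (hz₀ : rconj f u = ((⟪u, z₀⟫ - f z₀ : ℝ) : EReal)) : g = u :=
  hf.eq_of_forall_inner_sub_le (inner_sub_le_of_rconj_eq hz₀)

lemma gap_eq_smul_add_bregman {n p : ℕ} (X : Matrix (Fin n) (Fin p) ℝ) (f : Vec n → ℝ)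
    (lam Ωβ Ωs : ℝ) (β : Vec p) (θ g z₀ : Vec n) (hg : g = (-lam) • θ) :
    f (mv X β) + (⟪(-lam) • θ, z₀⟫ - f z₀) + lam * (Ωβ + Ωs)
      = lam * (Ωβ + Ωs - ⟪mv X.transpose θ, β⟫) + (f (mv X β) - f z₀ - ⟪g, mv X β - z₀⟫) := by
  rw [hg, inner_mv_transpose, inner_sub_right, real_inner_smul_left, real_inner_smul_left]
  ring

theorem stmt1_general {n p : ℕ} (X : Matrix (Fin n) (Fin p) ℝ)
    (f : Vec n → ℝ) (f' : Vec n → Vec n)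
    (hdiff : ∀ x, HasGradientAt f (f' x) x)
    (Ω : Vec p → EReal)
    (lam : ℝ)
    (β : Vec p) (θ : Vec n)
    (Ωβ Ωs : ℝ)
    (hΩβ : Ω β = (Ωβ : EReal))
    (hΩs : econj Ω (mv X.transpose θ) = (Ωs : EReal))
    (z₀ : Vec n)
    (hatt : rconj f ((-lam) • θ) = ((⟪(-lam) • θ, z₀⟫ - f z₀ : ℝ) : EReal)) :
    0 ≤ Ωβ + Ωs - ⟪mv X.transpose θ, β⟫ ∧
    ((∀ U : Vec n → ℝ, U 0 = 0 → (∀ u, 0 ≤ U u) →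
      (∀ a z : Vec n, U (z - a) ≤ f z - f a - ⟪f' a, z - a⟫) →
      lam * (Ωβ + Ωs - ⟪mv X.transpose θ, β⟫) + U (mv X β - z₀)
        ≤ f (mv X β) + (⟪(-lam) • θ, z₀⟫ - f z₀) + lam * (Ωβ + Ωs))) ∧
    ((∀ V : Vec n → ℝ, V 0 = 0 → (∀ u, 0 ≤ V u) →
      (∀ a z : Vec n, f z - f a - ⟪f' a, z - a⟫ ≤ V (z - a)) →
      f (mv X β) + (⟪(-lam) • θ, z₀⟫ - f z₀) + lam * (Ωβ + Ωs)
        ≤ lam * (Ωβ + Ωs - ⟪mv X.transpose θ, β⟫) + V (mv X β - z₀))) := by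
  have hgap := gap_eq_smul_add_bregman X f lam Ωβ Ωs β θ (f' z₀) z₀
    (gradient_eq_of_rconj_eq (hdiff z₀) hatt)
  refine ⟨by linarith [inner_le_add_of_econj_eq hΩβ hΩs], fun U _ _ hU => ?_,
    fun V _ _ hV => ?_⟩
  · linarith [hU z₀ (mv X β)]
  · linarith [hV z₀ (mv X β)]

/-- bounds on the duality gap.
`Ω(β) = Ωβ` and `Ω*(Xᵀθ) = Ωs` are finite, and the supremum defining `f*(-λθ)` is
attained at `z₀` (so that `f*(-λθ) = ⟪-λθ, z₀⟫ - f z₀`).  With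
`Ω̃(β,θ) = Ωβ + Ωs - ⟪Xᵀθ, β⟫` (nonnegative) and
`Gap_λ(β,θ) = f(Xβ) + f*(-λθ) + λ(Ωβ + Ωs)`:
if `f` is `U`-convex then `λ Ω̃ + U(Xβ - z₀) ≤ Gap`,
and if `f` is `V`-smooth then `Gap ≤ λ Ω̃ + V(Xβ - z₀)`. -/
theorem stmt1 {n p : ℕ} (X : Matrix (Fin n) (Fin p) ℝ)
    (f : Vec n → ℝ) (f' : Vec n → Vec n)
    (hdiff : ∀ x, HasGradientAt f (f' x) x)
    (hconv : ConvexOn ℝ Set.univ f)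
    (Ω : Vec p → EReal)
    (lam : ℝ) (hlam : 0 < lam)
    (β : Vec p) (θ : Vec n)
    (Ωβ Ωs : ℝ)
    (hΩβ : Ω β = (Ωβ : EReal))
    (hΩs : econj Ω (mv X.transpose θ) = (Ωs : EReal))
    (z₀ : Vec n)
    (hatt : rconj f ((-lam) • θ) = ((⟪(-lam) • θ, z₀⟫ - f z₀ : ℝ) : EReal)) :
    0 ≤ Ωβ + Ωs - ⟪mv X.transpose θ, β⟫ ∧
    ((∀ U : Vec n → ℝ, U 0 = 0 → (∀ u, 0 ≤ U u) →
      (∀ a z : Vec n, U (z - a) ≤ f z - f a - ⟪f' a, z - a⟫) →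
      lam * (Ωβ + Ωs - ⟪mv X.transpose θ, β⟫) + U (mv X β - z₀)
        ≤ f (mv X β) + (⟪(-lam) • θ, z₀⟫ - f z₀) + lam * (Ωβ + Ωs))) ∧
    ((∀ V : Vec n → ℝ, V 0 = 0 → (∀ u, 0 ≤ V u) →
      (∀ a z : Vec n, f z - f a - ⟪f' a, z - a⟫ ≤ V (z - a)) →
      f (mv X β) + (⟪(-lam) • θ, z₀⟫ - f z₀) + lam * (Ωβ + Ωs)
        ≤ lam * (Ωβ + Ωs - ⟪mv X.transpose θ, β⟫) + V (mv X β - z₀))) :=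
  stmt1_general X f f' hdiff Ω lam β θ Ωβ Ωs hΩβ hΩs z₀ hatt

end
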